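/- Well-formedness is preserved by widened steps: (i) the initial result ξ̃₀ = ({(e₀, ∅, ã_halt)}, ⊥, ⊥) satisfies wf(ξ̃₀, ξ̃₀); and (ii) for any ξ̃, ξ̃', ξ̃'' with ξ̃' ⤳̃Ξ ξ̃'', if wf(ξ̃, ξ̃') then wf(ξ̃', ξ̃''). (Inductive step in the proof of the well-formedness lemma.) -/

import Mathlib

/-!
Formalization of the P4F ("Pushdown Control-Flow Analysis for Free") framework:
ANF λ-calculus syntax, the finite-state abstract machine with store-allocated
continuations (P4F continuation allocator), the store-widened analysis, the
unbounded-stack abstract machine and its widened analysis, implied stacks,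
sub-step relations, finite-state and unbounded-stack paths, well-formedness,
conversion functions induced by an address bijection, and the precision
relations.
-/

namespace P4F

/-! ANF syntax: expressions, atomic expressions, lambdas. -/
mutual
inductive Exp (Var : Type) : Type where
  | letCall (y : Var) (f : AExp Var) (ae : AExp Var) (body : Exp Var)
  | ret (ae : AExp Var)
inductive AExp (Var : Type) : Type where
  | var (x : Var)
  | lam (l : Lam Var)
inductive Lam (Var : Type) : Type where
  | mk (x : Var) (body : Exp Var)
end

variable {Var Addr HAddr : Type}

/-- Pointwise containment of set-valued stores. -/
def SubStore {A B : Type} (σ σ' : A → Set B) : Prop := ∀ a, σ a ⊆ σ' a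

open Classical in
/-- Join a set-valued store with a single-point store: `σ ⊔ [a ↦ d]`. -/
noncomputable def joinOne {A B : Type} (σ : A → Set B) (a : A) (d : Set B) : A → Set B :=
  fun a' => if a' = a then σ a' ∪ d else σ a'

/-- Binding environments: partial maps from variables to addresses. -/
abbrev EnvF (Var Addr : Type) : Type := Var → Option Addr
/-- Abstract closures. -/
abbrev CloF (Var Addr : Type) : Type := Lam Var × EnvF Var Addr
/-- Value stores. -/
abbrev StoreF (Var Addr : Type) : Type := Addr → Set (CloF Var Addr)
/-- Stack frames. -/
abbrev FrameF (Var Addr : Type) : Type := Var × Exp Var × EnvF Var Addr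
/-- Continuation addresses for the P4F allocator: either the halt address
    (`none`) or a pair of a target expression and environment. -/
abbrev KAddrF (Var Addr : Type) : Type := Option (Exp Var × EnvF Var Addr)
/-- Continuations: a topmost frame paired with the address of the rest of the stack. -/
abbrev KontF (Var Addr : Type) : Type := FrameF Var Addr × KAddrF Var Addr
/-- Continuation stores. -/
abbrev KStoreF (Var Addr : Type) : Type := KAddrF Var Addr → Set (KontF Var Addr)

def emptyEnv : EnvF Var Addr := fun _ => none
def botStore : StoreF Var Addr := fun _ => ∅
def botKStore : KStoreF Var Addr := fun _ => ∅
/-- The distinguished halt continuation address. -/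
def ahalt : KAddrF Var Addr := none

open Classical in
/-- Environment extension `ρ[x ↦ a]`. -/
noncomputable def upd (ρ : EnvF Var Addr) (x : Var) (a : Addr) : EnvF Var Addr :=
  fun y => if y = x then some a else ρ y

/-- Abstract atomic-expression evaluation. -/
def aeval : AExp Var → EnvF Var Addr → StoreF Var Addr → Set (CloF Var Addr)
  | AExp.var x, ρ, σ =>
    match ρ x with
    | some a => σ a
    | none => ∅
  | AExp.lam l, ρ, _ => {(l, ρ)}

/-- Finite-state machine states `ς̃ = (e, ρ̃, σ̃, σ̃κ, ãκ)`. -/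
structure StateF (Var Addr : Type) : Type where
  e : Exp Var
  ρ : EnvF Var Addr
  σ : StoreF Var Addr
  σκ : KStoreF Var Addr
  aκ : KAddrF Var Addr

/-- The finite-state transition relation `⤳̃Σ`, parametrized by the value
    allocator; the continuation allocator is the P4F allocator
    `alloc̃κ(ς̃, e', ρ̃', σ̃') = (e', ρ̃')`. -/
inductive StepF (alloc : Var → StateF Var Addr → Addr) :
    StateF Var Addr → StateF Var Addr → Prop where
  | call {y x : Var} {f ae : AExp Var} {e e' : Exp Var} {ρ ρlam : EnvF Var Addr}
      {σ : StoreF Var Addr} {σκ : KStoreF Var Addr} {aκ : KAddrF Var Addr} :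
      (Lam.mk x e', ρlam) ∈ aeval f ρ σ →
      StepF alloc ⟨Exp.letCall y f ae e, ρ, σ, σκ, aκ⟩
        ⟨e',
         upd ρlam x (alloc x ⟨Exp.letCall y f ae e, ρ, σ, σκ, aκ⟩),
         joinOne σ (alloc x ⟨Exp.letCall y f ae e, ρ, σ, σκ, aκ⟩) (aeval ae ρ σ),
         joinOne σκ (some (e', upd ρlam x (alloc x ⟨Exp.letCall y f ae e, ρ, σ, σκ, aκ⟩)))
           {((y, e, ρ), aκ)},
         some (e', upd ρlam x (alloc x ⟨Exp.letCall y f ae e, ρ, σ, σκ, aκ⟩))⟩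
  | ret {x : Var} {ae : AExp Var} {e : Exp Var} {ρ ρκ : EnvF Var Addr}
      {σ : StoreF Var Addr} {σκ : KStoreF Var Addr} {aκ aκ' : KAddrF Var Addr} :
      ((x, e, ρκ), aκ') ∈ σκ aκ →
      StepF alloc ⟨Exp.ret ae, ρ, σ, σκ, aκ⟩
        ⟨e, upd ρκ x (alloc x ⟨Exp.ret ae, ρ, σ, σκ, aκ⟩),
         joinOne σ (alloc x ⟨Exp.ret ae, ρ, σ, σκ, aκ⟩) (aeval ae ρ σ),
         σκ, aκ'⟩

/-- Finite-state configurations `c̃ = (e, ρ̃, ãκ)`. -/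
abbrev ConfF (Var Addr : Type) : Type := Exp Var × EnvF Var Addr × KAddrF Var Addr

/-- Widened state spaces `ξ̃ = (r̃, σ̃, σ̃κ)`. -/
structure XiF (Var Addr : Type) : Type where
  r : Set (ConfF Var Addr)
  σ : StoreF Var Addr
  σκ : KStoreF Var Addr

def initConfF (e0 : Exp Var) : ConfF Var Addr := (e0, emptyEnv, ahalt)
def initStateF (e0 : Exp Var) : StateF Var Addr := ⟨e0, emptyEnv, botStore, botKStore, ahalt⟩
/-- The initial widened result `({(e₀, ∅, ã_halt)}, ⊥, ⊥)`. -/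
def initXiF (e0 : Exp Var) : XiF Var Addr := ⟨{initConfF e0}, botStore, botKStore⟩

/-- The state obtained by pairing a configuration with the global stores. -/
def stateOfF (ξ : XiF Var Addr) (c : ConfF Var Addr) : StateF Var Addr :=
  ⟨c.1, c.2.1, ξ.σ, ξ.σκ, c.2.2⟩

/-- The set `s̃` of all successors of the reachable configurations under the
    global stores, together with the injected initial state. -/
def succSetF (alloc : Var → StateF Var Addr → Addr) (e0 : Exp Var)
    (ξ : XiF Var Addr) : Set (StateF Var Addr) :=
  insert (initStateF e0) {ς' | ∃ c ∈ ξ.r, StepF alloc (stateOfF ξ c) ς'}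

/-- The widened transfer relation `⤳̃Ξ`. -/
def XiStepF (alloc : Var → StateF Var Addr → Addr) (e0 : Exp Var)
    (ξ ξ' : XiF Var Addr) : Prop :=
  ξ'.r = {c | ∃ ς ∈ succSetF alloc e0 ξ, c = (ς.e, ς.ρ, ς.aκ)} ∧
  ξ'.σ = (fun a => ⋃ ς ∈ succSetF alloc e0 ξ, ς.σ a) ∧
  ξ'.σκ = (fun aκ => ⋃ ς ∈ succSetF alloc e0 ξ, ς.σκ aκ)

/-- Implied stacks: `ψ̃ ∈ψ ãκ (via σ̃κ)`. -/
inductive Implied (σκ : KStoreF Var Addr) : KAddrF Var Addr → List (KontF Var Addr) → Prop where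
  | halt : Implied σκ ahalt []
  | cons {φ : FrameF Var Addr} {aκ' aκ : KAddrF Var Addr} {ψ : List (KontF Var Addr)} :
      (φ, aκ') ∈ σκ aκ → Implied σκ aκ' ψ → aκ ≠ ahalt →
      Implied σκ aκ ((φ, aκ') :: ψ)

/-- The finite-state sub-step relation `⤳⊑̃`. -/
def SubStepF (alloc : Var → StateF Var Addr → Addr) (ς ς' : StateF Var Addr) : Prop :=
  ∃ σ₁ σκ₁ σ₂ σκ₂,
    StepF alloc ⟨ς.e, ς.ρ, σ₁, σκ₁, ς.aκ⟩ ⟨ς'.e, ς'.ρ, σ₂, σκ₂, ς'.aκ⟩ ∧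
    SubStore σ₁ ς.σ ∧ SubStore σκ₁ ς.σκ ∧ SubStore σ₂ ς'.σ ∧ SubStore σκ₂ ς'.σκ

/-- The finite-state sub-step relation `⤳⊑̃ (with ã, clo)`. -/
def SubStepFWithClo (alloc : Var → StateF Var Addr → Addr) (ς ς' : StateF Var Addr)
    (a : Addr) (clo : CloF Var Addr) : Prop :=
  ∃ σ₁ σκ₁ σ₂ σκ₂,
    StepF alloc ⟨ς.e, ς.ρ, σ₁, σκ₁, ς.aκ⟩ ⟨ς'.e, ς'.ρ, σ₂, σκ₂, ς'.aκ⟩ ∧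
    SubStore σ₁ ς.σ ∧ SubStore σκ₁ ς.σκ ∧ SubStore σ₂ ς'.σ ∧ SubStore σκ₂ ς'.σκ ∧
    clo ∈ σ₂ a

/-- The finite-state sub-step relation `⤳⊑̃ (with κ̃, ã''κ)`. -/
def SubStepFWithKont (alloc : Var → StateF Var Addr → Addr) (ς ς' : StateF Var Addr)
    (aκ'' : KAddrF Var Addr) (κ : KontF Var Addr) : Prop :=
  ∃ σ₁ σκ₁ σ₂ σκ₂,
    StepF alloc ⟨ς.e, ς.ρ, σ₁, σκ₁, ς.aκ⟩ ⟨ς'.e, ς'.ρ, σ₂, σκ₂, ς'.aκ⟩ ∧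
    SubStore σ₁ ς.σ ∧ SubStore σκ₁ ς.σκ ∧ SubStore σ₂ ς'.σ ∧ SubStore σκ₂ ς'.σκ ∧
    κ ∈ σκ₂ aκ''

/-- Finite-state paths `(c̃, ψ̃) ↪̃ (c̃', ψ̃') (via ξ̃, ξ̃')`. -/
inductive PathF (alloc : Var → StateF Var Addr → Addr) (ξ ξ' : XiF Var Addr) :
    ConfF Var Addr × List (KontF Var Addr) →
    ConfF Var Addr × List (KontF Var Addr) → Prop where
  | refl {e : Exp Var} {ρ : EnvF Var Addr} {aκ : KAddrF Var Addr}
      {ψ : List (KontF Var Addr)} :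
      (e, ρ, aκ) ∈ ξ'.r → Implied ξ'.σκ aκ ψ →
      PathF alloc ξ ξ' ((e, ρ, aκ), ψ) ((e, ρ, aκ), ψ)
  | ret {c : ConfF Var Addr} {ψ₀ : List (KontF Var Addr)} {ae : AExp Var}
      {ρ'' ρκ : EnvF Var Addr} {aκ'' aκ' : KAddrF Var Addr} {x : Var} {e' : Exp Var}
      {ψ' : List (KontF Var Addr)} :
      PathF alloc ξ ξ' (c, ψ₀) ((Exp.ret ae, ρ'', aκ''), ((x, e', ρκ), aκ') :: ψ') →
      (Exp.ret ae, ρ'', aκ'') ∈ ξ.r →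
      ((x, e', ρκ), aκ') ∈ ξ.σκ aκ'' →
      (e', upd ρκ x (alloc x ⟨Exp.ret ae, ρ'', ξ.σ, ξ.σκ, aκ''⟩), aκ') ∈ ξ'.r →
      SubStepF alloc ⟨Exp.ret ae, ρ'', ξ.σ, ξ.σκ, aκ''⟩
        ⟨e', upd ρκ x (alloc x ⟨Exp.ret ae, ρ'', ξ.σ, ξ.σκ, aκ''⟩), ξ'.σ, ξ'.σκ, aκ'⟩ →
      PathF alloc ξ ξ' (c, ψ₀)
        ((e', upd ρκ x (alloc x ⟨Exp.ret ae, ρ'', ξ.σ, ξ.σκ, aκ''⟩), aκ'), ψ')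
  | call {c : ConfF Var Addr} {ψ₀ : List (KontF Var Addr)} {x : Var}
      {f ae : AExp Var} {e'' e' : Exp Var} {ρ'' ρ' : EnvF Var Addr}
      {aκ'' aκ' : KAddrF Var Addr} {ψ' : List (KontF Var Addr)} :
      PathF alloc ξ ξ' (c, ψ₀) ((Exp.letCall x f ae e'', ρ'', aκ''), ψ') →
      ((x, e'', ρ''), aκ'') ∈ ξ'.σκ aκ' →
      SubStepF alloc ⟨Exp.letCall x f ae e'', ρ'', ξ.σ, ξ.σκ, aκ''⟩
        ⟨e', ρ', ξ'.σ, ξ'.σκ, aκ'⟩ →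
      PathF alloc ξ ξ' (c, ψ₀) ((e', ρ', aκ'), ((x, e'', ρ''), aκ'') :: ψ')

/-- `Entry` maps a continuation address to the entry-point configuration of
    the function invocation whose configurations use that address. -/
def Entry (e0 : Exp Var) : KAddrF Var Addr → ConfF Var Addr
  | none => (e0, emptyEnv, ahalt)
  | some (eκ, ρκ) => (eκ, ρκ, some (eκ, ρκ))

/-- The non-recursive well-formedness sub-properties
    `wf_⊑ ∧ wf_init ∧ wf_halt ∧ wf_r̃ ∧ wf_σ̃ ∧ wf_σ̃κ`. -/
def WFRest (alloc : Var → StateF Var Addr → Addr) (e0 : Exp Var)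
    (ξ ξ' : XiF Var Addr) : Prop :=
  (ξ.r ⊆ ξ'.r ∧ SubStore ξ.σ ξ'.σ ∧ SubStore ξ.σκ ξ'.σκ) ∧
  (initConfF e0 ∈ ξ'.r) ∧
  (∀ κ : KontF Var Addr, κ ∉ ξ'.σκ ahalt) ∧
  (∀ c ∈ ξ'.r, ∃ ψ, Implied ξ'.σκ c.2.2 ψ ∧
      PathF alloc ξ ξ' (initConfF e0, []) (c, ψ)) ∧
  (∀ (a : Addr) (clo : CloF Var Addr), clo ∈ ξ'.σ a →
      ∃ c ∈ ξ.r, ∃ c' ∈ ξ'.r,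
        SubStepFWithClo alloc (stateOfF ξ c) (stateOfF ξ' c') a clo) ∧
  (∀ (aκ' : KAddrF Var Addr) (x : Var) (e : Exp Var) (ρκ : EnvF Var Addr)
      (aκ : KAddrF Var Addr), ((x, e, ρκ), aκ) ∈ ξ'.σκ aκ' →
      ∃ (eκ' : Exp Var) (ρκ' : EnvF Var Addr), aκ' = some (eκ', ρκ') ∧
        Entry e0 aκ' ∈ ξ'.r ∧
        ∃ (f ae : AExp Var), (Exp.letCall x f ae e, ρκ, aκ) ∈ ξ.r ∧
          SubStepFWithKont alloc ⟨Exp.letCall x f ae e, ρκ, ξ.σ, ξ.σκ, aκ⟩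
            ⟨eκ', ρκ', ξ'.σ, ξ'.σκ, aκ'⟩ aκ' ((x, e, ρκ), aκ))

/-- Well-formedness `wf(ξ̃, ξ̃')`. -/
inductive WF (alloc : Var → StateF Var Addr → Addr) (e0 : Exp Var) :
    XiF Var Addr → XiF Var Addr → Prop where
  | init :
      WFRest alloc e0 (initXiF e0) (initXiF e0) →
      WF alloc e0 (initXiF e0) (initXiF e0)
  | step {ξ'' ξ ξ' : XiF Var Addr} :
      WF alloc e0 ξ'' ξ → XiStepF alloc e0 ξ ξ' → WFRest alloc e0 ξ ξ' →
      WF alloc e0 ξ ξ'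

/-! ### The unbounded-stack machine -/

/-- Unbounded-stack machine states `ς̂ = (e, ρ̂, σ̂, κ̂)`. -/
structure StateH (Var HAddr : Type) : Type where
  e : Exp Var
  ρ : EnvF Var HAddr
  σ : StoreF Var HAddr
  κ : List (FrameF Var HAddr)

/-- The unbounded-stack transition relation `⤳̂Σ`. -/
inductive StepH (halloc : Var → StateH Var HAddr → HAddr) :
    StateH Var HAddr → StateH Var HAddr → Prop where
  | call {y x : Var} {f ae : AExp Var} {e e' : Exp Var} {ρ ρlam : EnvF Var HAddr}
      {σ : StoreF Var HAddr} {κ : List (FrameF Var HAddr)} :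
      (Lam.mk x e', ρlam) ∈ aeval f ρ σ →
      StepH halloc ⟨Exp.letCall y f ae e, ρ, σ, κ⟩
        ⟨e', upd ρlam x (halloc x ⟨Exp.letCall y f ae e, ρ, σ, κ⟩),
         joinOne σ (halloc x ⟨Exp.letCall y f ae e, ρ, σ, κ⟩) (aeval ae ρ σ),
         (y, e, ρ) :: κ⟩
  | ret {x : Var} {ae : AExp Var} {e : Exp Var} {ρ ρκ : EnvF Var HAddr}
      {σ : StoreF Var HAddr} {κ : List (FrameF Var HAddr)} :
      StepH halloc ⟨Exp.ret ae, ρ, σ, (x, e, ρκ) :: κ⟩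
        ⟨e, upd ρκ x (halloc x ⟨Exp.ret ae, ρ, σ, (x, e, ρκ) :: κ⟩),
         joinOne σ (halloc x ⟨Exp.ret ae, ρ, σ, (x, e, ρκ) :: κ⟩) (aeval ae ρ σ),
         κ⟩

/-- Unbounded-stack configurations `ĉ = (e, ρ̂, κ̂)`. -/
abbrev ConfH (Var HAddr : Type) : Type := Exp Var × EnvF Var HAddr × List (FrameF Var HAddr)

/-- Unbounded-stack widened state spaces `ξ̂ = (r̂, σ̂)`. -/
structure XiH (Var HAddr : Type) : Type where
  r : Set (ConfH Var HAddr)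
  σ : StoreF Var HAddr

def initConfH (e0 : Exp Var) : ConfH Var HAddr := (e0, emptyEnv, [])
def initStateH (e0 : Exp Var) : StateH Var HAddr := ⟨e0, emptyEnv, botStore, []⟩

def succSetH (halloc : Var → StateH Var HAddr → HAddr) (e0 : Exp Var)
    (ξ : XiH Var HAddr) : Set (StateH Var HAddr) :=
  insert (initStateH e0) {ς' | ∃ c ∈ ξ.r, StepH halloc ⟨c.1, c.2.1, ξ.σ, c.2.2⟩ ς'}

/-- The unbounded-stack widened transfer relation `⤳̂Ξ`. -/
def XiStepH (halloc : Var → StateH Var HAddr → HAddr) (e0 : Exp Var)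
    (ξ ξ' : XiH Var HAddr) : Prop :=
  ξ'.r = {c | ∃ ς ∈ succSetH halloc e0 ξ, c = (ς.e, ς.ρ, ς.κ)} ∧
  ξ'.σ = (fun a => ⋃ ς ∈ succSetH halloc e0 ξ, ς.σ a)

/-- The unbounded-stack sub-step relation `⤳⊑̂`. -/
def SubStepH (halloc : Var → StateH Var HAddr → HAddr) (ς ς' : StateH Var HAddr) : Prop :=
  ∃ σ₂, StepH halloc ⟨ς.e, ς.ρ, ς.σ, ς.κ⟩ ⟨ς'.e, ς'.ρ, σ₂, ς'.κ⟩ ∧ SubStore σ₂ ς'.σ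

/-- Unbounded-stack paths `ĉ ↪̂ ĉ' (via r̂, σ̂)`. -/
inductive PathH (halloc : Var → StateH Var HAddr → HAddr)
    (rH : Set (ConfH Var HAddr)) (σH : StoreF Var HAddr) :
    ConfH Var HAddr → ConfH Var HAddr → Prop where
  | refl (c : ConfH Var HAddr) : PathH halloc rH σH c c
  | step {c c' : ConfH Var HAddr} {e' : Exp Var} {ρ' : EnvF Var HAddr}
      {κ' : List (FrameF Var HAddr)} :
      PathH halloc rH σH c c' →
      SubStepH halloc ⟨c'.1, c'.2.1, σH, c'.2.2⟩ ⟨e', ρ', σH, κ'⟩ →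
      PathH halloc rH σH c (e', ρ', κ')

/-! ### Conversions and precision relations (Assumption 1) -/

/-- `H_Env` induced by the address bijection. -/
def HEnv (HA : Addr ≃ HAddr) (ρ : EnvF Var Addr) : EnvF Var HAddr :=
  fun x => (ρ x).map HA

/-- `H_Clo`. -/
def HClo (HA : Addr ≃ HAddr) (clo : CloF Var Addr) : CloF Var HAddr :=
  (clo.1, HEnv HA clo.2)

/-- `H_Frame`. -/
def HFrame (HA : Addr ≃ HAddr) (φ : FrameF Var Addr) : FrameF Var HAddr :=
  (φ.1, φ.2.1, HEnv HA φ.2.2)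

/-- `H_Kont`: componentwise conversion of an implied stack into an unbounded stack. -/
def HKont (HA : Addr ≃ HAddr) (ψ : List (KontF Var Addr)) : List (FrameF Var HAddr) :=
  ψ.map fun k => HFrame HA k.1

/-- `H_C`: conversion of a finite-state configuration with an implied stack
    into an unbounded-stack configuration. -/
def HC (HA : Addr ≃ HAddr) (c : ConfF Var Addr) (ψ : List (KontF Var Addr)) :
    ConfH Var HAddr :=
  (c.1, HEnv HA c.2.1, HKont HA ψ)

/-- Store precision `σ̂ ⊒Store σ̃`. -/
def StorePrec (HA : Addr ≃ HAddr) (σH : StoreF Var HAddr) (σ : StoreF Var Addr) : Prop :=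
  ∀ (a : Addr) (clo : CloF Var Addr), clo ∈ σ a → HClo HA clo ∈ σH (HA a)

/-- Reachable-configurations precision `r̂ ⊒R r̃ (via σ̃κ)`. -/
def RPrec (HA : Addr ≃ HAddr) (rH : Set (ConfH Var HAddr))
    (r : Set (ConfF Var Addr)) (σκ : KStoreF Var Addr) : Prop :=
  ∀ (e : Exp Var) (ρ : EnvF Var Addr) (aκ : KAddrF Var Addr)
    (ψ : List (KontF Var Addr)),
    (e, ρ, aκ) ∈ r → Implied σκ aκ ψ → (e, HEnv HA ρ, HKont HA ψ) ∈ rH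

/-- State-space precision `ξ̂ ⊒Ξ ξ̃`. -/
def XiPrec (HA : Addr ≃ HAddr) (ξH : XiH Var HAddr) (ξ : XiF Var Addr) : Prop :=
  RPrec HA ξH.r ξ.r ξ.σκ ∧ StorePrec HA ξH.σ ξ.σ

/-- Assumption 2 (allocation equivalence). -/
def AllocEquiv (HA : Addr ≃ HAddr) (alloc : Var → StateF Var Addr → Addr)
    (halloc : Var → StateH Var HAddr → HAddr) : Prop :=
  ∀ (x : Var) (e : Exp Var) (ρ : EnvF Var Addr) (σ : StoreF Var Addr)
    (σκ : KStoreF Var Addr) (aκ : KAddrF Var Addr) (σH : StoreF Var HAddr)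
    (ψ : List (KontF Var Addr)),
    StorePrec HA σH σ → Implied σκ aκ ψ →
    halloc x ⟨e, HEnv HA ρ, σH, HKont HA ψ⟩ = HA (alloc x ⟨e, ρ, σ, σκ, aκ⟩)

/-- Assumption 3 (allocation consistency). -/
def AllocConsistent (alloc : Var → StateF Var Addr → Addr) (e0 : Exp Var) : Prop :=
  ∀ (ξp ξ ξ' : XiF Var Addr) (e e' : Exp Var) (ρ ρ' : EnvF Var Addr)
    (aκ aκ' : KAddrF Var Addr) (σ'' : StoreF Var Addr) (σκ'' : KStoreF Var Addr)
    (x : Var),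
    WF alloc e0 ξp ξ →
    StepF alloc ⟨e, ρ, ξ.σ, ξ.σκ, aκ⟩
      ⟨e', upd ρ' x (alloc x ⟨e, ρ, ξ.σ, ξ.σκ, aκ⟩), σ'', σκ'', aκ'⟩ →
    XiStepF alloc e0 ξ ξ' →
    alloc x ⟨e, ρ, ξ.σ, ξ.σκ, aκ⟩ = alloc x ⟨e, ρ, ξ'.σ, ξ'.σκ, aκ⟩

end P4F

namespace P4F


/-! ### Auxiliary lemmas for the proof -/

section Aux

variable {Var Addr : Type}

lemma subStore_rfl {A B : Type} {σ : A → Set B} : SubStore σ σ := fun _ => subset_rfl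

lemma subStore_trans {A B : Type} {σ₁ σ₂ σ₃ : A → Set B}
    (h1 : SubStore σ₁ σ₂) (h2 : SubStore σ₂ σ₃) : SubStore σ₁ σ₃ :=
  fun a => (h1 a).trans (h2 a)

lemma aeval_mono {a0 : AExp Var} {ρ : EnvF Var Addr} {σ σ' : StoreF Var Addr}
    (h : SubStore σ σ') : aeval a0 ρ σ ⊆ aeval a0 ρ σ' := by
  cases a0 with
  | var x =>
    dsimp [aeval]
    cases ρ x with
    | none => exact fun _ hx => hx.elim
    | some a => exact h a
  | lam l => exact subset_rfl

lemma joinOne_mono {A B : Type} {σ σ' : A → Set B} {a : A} {d d' : Set B}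
    (h : SubStore σ σ') (hd : d ⊆ d') : SubStore (joinOne σ a d) (joinOne σ' a d') := by
  intro a'
  unfold joinOne
  split_ifs with hh
  · exact Set.union_subset_union (h a') hd
  · exact h a'

lemma subStore_joinOne {A B : Type} (σ : A → Set B) (a : A) (d : Set B) :
    SubStore σ (joinOne σ a d) := by
  intro a'
  unfold joinOne
  split_ifs
  · exact Set.subset_union_left
  · exact subset_rfl

lemma mem_joinOne_self {A B : Type} {σ : A → Set B} {a : A} {d : Set B} {v : B}
    (hv : v ∈ d) : v ∈ joinOne σ a d a := by
  unfold joinOne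
  simp [hv]

lemma Implied.mono {σκ σκ' : KStoreF Var Addr} (h : SubStore σκ σκ')
    {aκ : KAddrF Var Addr} {ψ : List (KontF Var Addr)} (hi : Implied σκ aκ ψ) :
    Implied σκ' aκ ψ := by
  induction hi with
  | halt => exact .halt
  | cons hm _ hne ih => exact .cons (h _ hm) ih hne

lemma implied_halt {σκ : KStoreF Var Addr} {ψ : List (KontF Var Addr)}
    (h : Implied σκ ahalt ψ) : ψ = [] := by
  cases h with
  | halt => rfl
  | cons _ _ hne => exact absurd rfl hne

lemma implied_some {σκ : KStoreF Var Addr} {p : Exp Var × EnvF Var Addr}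
    {ψ : List (KontF Var Addr)} (h : Implied σκ (some p) ψ) :
    ∃ φ aκ' ψ₁, ψ = (φ, aκ') :: ψ₁ ∧ (φ, aκ') ∈ σκ (some p) ∧ Implied σκ aκ' ψ₁ := by
  cases h with
  | cons hm hi _ => exact ⟨_, _, _, rfl, hm, hi⟩

lemma WF.rest {alloc : Var → StateF Var Addr → Addr} {e0 : Exp Var}
    {ξ ξ' : XiF Var Addr} (h : WF alloc e0 ξ ξ') : WFRest alloc e0 ξ ξ' := by
  cases h with
  | init h => exact h
  | step _ _ h => exact h

lemma wfrest_init (alloc : Var → StateF Var Addr → Addr) (e0 : Exp Var) :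
    WFRest alloc e0 (initXiF e0) (initXiF e0) := by
  refine ⟨⟨subset_rfl, subStore_rfl, subStore_rfl⟩, rfl, ?_, ?_, ?_, ?_⟩
  · exact fun κ h => h
  · intro c hc
    cases hc
    exact ⟨[], Implied.halt, PathF.refl rfl Implied.halt⟩
  · intro a clo h
    exact absurd h (Set.notMem_empty _)
  · intro aκ' x e ρκ aκ h
    exact absurd h (Set.notMem_empty _)

lemma lift_one {alloc : Var → StateF Var Addr → Addr} {e0 : Exp Var}
    (hC : AllocConsistent alloc e0) {ξp ξ ξ' : XiF Var Addr}
    (hwfp : WF alloc e0 ξp ξ) (hXi : XiStepF alloc e0 ξ ξ')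
    (hσ : SubStore ξ.σ ξ'.σ) (hσκ : SubStore ξ.σκ ξ'.σκ)
    {e : Exp Var} {ρ : EnvF Var Addr} {aκ : KAddrF Var Addr} {ς : StateF Var Addr}
    (hs : StepF alloc ⟨e, ρ, ξ.σ, ξ.σκ, aκ⟩ ς) :
    ∃ ς', StepF alloc ⟨e, ρ, ξ'.σ, ξ'.σκ, aκ⟩ ς' ∧ ς'.e = ς.e ∧ ς'.ρ = ς.ρ ∧
      ς'.aκ = ς.aκ ∧ SubStore ς.σ ς'.σ ∧ SubStore ς.σκ ς'.σκ := by
  cases hs with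
  | @call y x f ae eb e' _ ρlam _ _ _ hf =>
    have heq : alloc x ⟨Exp.letCall y f ae eb, ρ, ξ.σ, ξ.σκ, aκ⟩ =
        alloc x ⟨Exp.letCall y f ae eb, ρ, ξ'.σ, ξ'.σκ, aκ⟩ :=
      hC ξp ξ ξ' _ _ _ ρlam _ _ _ _ x hwfp (StepF.call hf) hXi
    refine ⟨_, StepF.call (aeval_mono hσ hf), ?_, ?_, ?_, ?_, ?_⟩ <;>
      rw [← heq]
    · exact joinOne_mono hσ (aeval_mono hσ)
    · exact joinOne_mono hσκ subset_rfl
  | @ret x ae eb _ ρκ _ _ _ aκ' hκ =>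
    have heq : alloc x ⟨Exp.ret ae, ρ, ξ.σ, ξ.σκ, aκ⟩ =
        alloc x ⟨Exp.ret ae, ρ, ξ'.σ, ξ'.σκ, aκ⟩ :=
      hC ξp ξ ξ' _ _ _ ρκ _ _ _ _ x hwfp (StepF.ret hκ) hXi
    refine ⟨_, StepF.ret (hσκ _ hκ), ?_, ?_, ?_, ?_, ?_⟩ <;>
      rw [← heq]
    · exact joinOne_mono hσ (aeval_mono hσ)
    · exact hσκ

lemma mem_r_of_succ {alloc : Var → StateF Var Addr → Addr} {e0 : Exp Var}
    {ξ ξ' : XiF Var Addr} (h : XiStepF alloc e0 ξ ξ') {ς : StateF Var Addr}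
    (hς : ς ∈ succSetF alloc e0 ξ) : (ς.e, ς.ρ, ς.aκ) ∈ ξ'.r := by
  rw [h.1]; exact ⟨ς, hς, rfl⟩

lemma store_sub_of_succ {alloc : Var → StateF Var Addr → Addr} {e0 : Exp Var}
    {ξ ξ' : XiF Var Addr} (h : XiStepF alloc e0 ξ ξ') {ς : StateF Var Addr}
    (hς : ς ∈ succSetF alloc e0 ξ) : SubStore ς.σ ξ'.σ := by
  intro a x hx; rw [h.2.1]; exact Set.mem_biUnion hς hx

lemma kstore_sub_of_succ {alloc : Var → StateF Var Addr → Addr} {e0 : Exp Var}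
    {ξ ξ' : XiF Var Addr} (h : XiStepF alloc e0 ξ ξ') {ς : StateF Var Addr}
    (hς : ς ∈ succSetF alloc e0 ξ) : SubStore ς.σκ ξ'.σκ := by
  intro a x hx; rw [h.2.2]; exact Set.mem_biUnion hς hx

lemma init_mem_succ (alloc : Var → StateF Var Addr → Addr) (e0 : Exp Var)
    (ξ : XiF Var Addr) : initStateF e0 ∈ succSetF alloc e0 ξ :=
  Set.mem_insert _ _

lemma step_mem_succ {alloc : Var → StateF Var Addr → Addr} {e0 : Exp Var}
    {ξ : XiF Var Addr} {c : ConfF Var Addr} {ς : StateF Var Addr}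
    (hc : c ∈ ξ.r) (hs : StepF alloc (stateOfF ξ c) ς) : ς ∈ succSetF alloc e0 ξ :=
  Set.mem_insert_of_mem _ ⟨c, hc, hs⟩

lemma init_mem_r {alloc : Var → StateF Var Addr → Addr} {e0 : Exp Var}
    {ξ ξ' : XiF Var Addr} (h : XiStepF alloc e0 ξ ξ') : initConfF e0 ∈ ξ'.r :=
  mem_r_of_succ h (init_mem_succ alloc e0 ξ)

lemma mono_step {alloc : Var → StateF Var Addr → Addr} {e0 : Exp Var}
    (hC : AllocConsistent alloc e0) {ξ ξ' ξ'' : XiF Var Addr}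
    (hwf : WF alloc e0 ξ ξ') (h2 : XiStepF alloc e0 ξ' ξ'') :
    ξ'.r ⊆ ξ''.r ∧ SubStore ξ'.σ ξ''.σ ∧ SubStore ξ'.σκ ξ''.σκ := by
  cases hwf with
  | init _ =>
    refine ⟨?_, ?_, ?_⟩
    · intro c hc
      cases hc
      exact init_mem_r h2
    · intro a x hx
      exact absurd hx (Set.notMem_empty _)
    · intro a x hx
      exact absurd hx (Set.notMem_empty _)
  | @step ξp _ _ hwfp hXi hRest =>
    refine ⟨?_, ?_, ?_⟩
    · intro c hc
      rw [hXi.1] at hc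
      obtain ⟨ς, hm, rfl⟩ := hc
      rcases hm with hm | ⟨c₀, hc₀, hstep⟩
      · subst hm
        exact init_mem_r h2
      · obtain ⟨ς', hs', he, hρ, ha, _, _⟩ :=
          lift_one hC hwfp hXi hRest.1.2.1 hRest.1.2.2 hstep
        have : ς' ∈ succSetF alloc e0 ξ' := step_mem_succ (hRest.1.1 hc₀) hs'
        have := mem_r_of_succ h2 this
        rwa [he, hρ, ha] at this
    · intro a x hx
      rw [hXi.2.1] at hx
      simp only [Set.mem_iUnion] at hx
      obtain ⟨ς, hm, hx⟩ := hx
      rcases hm with hm | ⟨c₀, hc₀, hstep⟩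
      · subst hm
        exact absurd hx (Set.notMem_empty _)
      · obtain ⟨ς', hs', _, _, _, hsub, _⟩ :=
          lift_one hC hwfp hXi hRest.1.2.1 hRest.1.2.2 hstep
        exact store_sub_of_succ h2 (step_mem_succ (hRest.1.1 hc₀) hs') a (hsub a hx)
    · intro a x hx
      rw [hXi.2.2] at hx
      simp only [Set.mem_iUnion] at hx
      obtain ⟨ς, hm, hx⟩ := hx
      rcases hm with hm | ⟨c₀, hc₀, hstep⟩
      · subst hm
        exact absurd hx (Set.notMem_empty _)
      · obtain ⟨ς', hs', _, _, _, _, hsub⟩ :=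
          lift_one hC hwfp hXi hRest.1.2.1 hRest.1.2.2 hstep
        exact kstore_sub_of_succ h2 (step_mem_succ (hRest.1.1 hc₀) hs') a (hsub a hx)

lemma comp_halt {alloc : Var → StateF Var Addr → Addr} {e0 : Exp Var}
    {ξ ξ' ξ'' : XiF Var Addr} (hwf : WF alloc e0 ξ ξ')
    (h2 : XiStepF alloc e0 ξ' ξ'') : ∀ κ : KontF Var Addr, κ ∉ ξ''.σκ ahalt := by
  intro κ hκ
  rw [h2.2.2] at hκ
  simp only [Set.mem_iUnion] at hκ
  obtain ⟨ς, hm, hκ⟩ := hκ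
  rcases hm with hm | ⟨c₀, hc₀, hstep⟩
  · subst hm
    exact absurd hκ (Set.notMem_empty _)
  · obtain ⟨ec₀, ρc₀, aκc₀⟩ := c₀
    cases hstep with
    | call hf =>
      dsimp only at hκ
      rw [joinOne, if_neg (by simp [ahalt])] at hκ
      exact (WF.rest hwf).2.2.1 κ hκ
    | ret hκ' =>
      exact (WF.rest hwf).2.2.1 κ hκ

lemma comp_sigma {alloc : Var → StateF Var Addr → Addr} {e0 : Exp Var}
    (hC : AllocConsistent alloc e0) {ξ ξ' ξ'' : XiF Var Addr}
    (hwf : WF alloc e0 ξ ξ') (h2 : XiStepF alloc e0 ξ' ξ'') :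
    ∀ (a : Addr) (clo : CloF Var Addr), clo ∈ ξ''.σ a →
      ∃ c ∈ ξ'.r, ∃ c' ∈ ξ''.r,
        SubStepFWithClo alloc (stateOfF ξ' c) (stateOfF ξ'' c') a clo := by
  intro a clo hclo
  rw [h2.2.1] at hclo
  simp only [Set.mem_iUnion] at hclo
  obtain ⟨ς, hm, hclo⟩ := hclo
  rcases hm with hm | ⟨c₀, hc₀, hstep⟩
  · subst hm
    exact absurd hclo (Set.notMem_empty _)
  · have hςmem : ς ∈ succSetF alloc e0 ξ' := step_mem_succ hc₀ hstep
    refine ⟨c₀, hc₀, (ς.e, ς.ρ, ς.aκ), mem_r_of_succ h2 hςmem,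
      ξ'.σ, ξ'.σκ, ς.σ, ς.σκ, hstep, subStore_rfl, subStore_rfl,
      store_sub_of_succ h2 hςmem, kstore_sub_of_succ h2 hςmem, hclo⟩

lemma comp_sigmak {alloc : Var → StateF Var Addr → Addr} {e0 : Exp Var}
    (hC : AllocConsistent alloc e0) {ξ ξ' ξ'' : XiF Var Addr}
    (hwf : WF alloc e0 ξ ξ') (h2 : XiStepF alloc e0 ξ' ξ'') :
    ∀ (aκ' : KAddrF Var Addr) (x : Var) (e : Exp Var) (ρκ : EnvF Var Addr)
      (aκ : KAddrF Var Addr), ((x, e, ρκ), aκ) ∈ ξ''.σκ aκ' →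
      ∃ (eκ' : Exp Var) (ρκ' : EnvF Var Addr), aκ' = some (eκ', ρκ') ∧
        Entry e0 aκ' ∈ ξ''.r ∧
        ∃ (f ae : AExp Var), (Exp.letCall x f ae e, ρκ, aκ) ∈ ξ'.r ∧
          SubStepFWithKont alloc ⟨Exp.letCall x f ae e, ρκ, ξ'.σ, ξ'.σκ, aκ⟩
            ⟨eκ', ρκ', ξ''.σ, ξ''.σκ, aκ'⟩ aκ' ((x, e, ρκ), aκ) := by
  have hmono := mono_step hC hwf h2
  have hrest := WF.rest hwf
  -- transporting an old membership κ ∈ ξ'.σκ aκ'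
  have old : ∀ (aκ' : KAddrF Var Addr) (x : Var) (e : Exp Var) (ρκ : EnvF Var Addr)
      (aκ : KAddrF Var Addr), ((x, e, ρκ), aκ) ∈ ξ'.σκ aκ' →
      ∃ (eκ' : Exp Var) (ρκ' : EnvF Var Addr), aκ' = some (eκ', ρκ') ∧
        Entry e0 aκ' ∈ ξ''.r ∧
        ∃ (f ae : AExp Var), (Exp.letCall x f ae e, ρκ, aκ) ∈ ξ'.r ∧
          SubStepFWithKont alloc ⟨Exp.letCall x f ae e, ρκ, ξ'.σ, ξ'.σκ, aκ⟩
            ⟨eκ', ρκ', ξ''.σ, ξ''.σκ, aκ'⟩ aκ' ((x, e, ρκ), aκ) := by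
    intro aκ' x e ρκ aκ hκ
    obtain ⟨eκ', ρκ', haκ', hEntry, f, ae, hcall, σ₁, σκ₁, σ₂, σκ₂, hst, hs1, hs2, hs3, hs4, hk⟩ :=
      hrest.2.2.2.2.2 aκ' x e ρκ aκ hκ
    exact ⟨eκ', ρκ', haκ', hmono.1 hEntry, f, ae, hrest.1.1 hcall,
      σ₁, σκ₁, σ₂, σκ₂, hst, subStore_trans hs1 hrest.1.2.1,
      subStore_trans hs2 hrest.1.2.2, subStore_trans hs3 hmono.2.1,
      subStore_trans hs4 hmono.2.2, hk⟩
  intro aκ' x e ρκ aκ hκ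
  rw [h2.2.2] at hκ
  simp only [Set.mem_iUnion] at hκ
  obtain ⟨ς, hm, hκ⟩ := hκ
  rcases hm with hm | ⟨c₀, hc₀, hstep⟩
  · subst hm
    exact absurd hκ (Set.notMem_empty _)
  · have hςmem : ς ∈ succSetF alloc e0 ξ' := step_mem_succ hc₀ hstep
    obtain ⟨ec₀, ρc₀, aκc₀⟩ := c₀
    cases hstep with
    | @call y xv f ae eb e' _ ρlam _ _ _ hf =>
      dsimp only at hκ
      rw [joinOne] at hκ
      split_ifs at hκ with hifc
      · rcases hκ with hκ | hκ
        · exact old aκ' x e ρκ aκ hκ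
        · -- the newly pushed continuation
          simp only [Set.mem_singleton_iff, Prod.mk.injEq] at hκ
          obtain ⟨⟨hx, he, hρκ⟩, haκ⟩ := hκ
          subst hx; subst he; subst hρκ; subst haκ; subst hifc
          exact ⟨_, _, rfl, mem_r_of_succ h2 hςmem, f, ae, hc₀, ξ'.σ, ξ'.σκ, _, _,
            StepF.call hf, subStore_rfl, subStore_rfl, store_sub_of_succ h2 hςmem,
            kstore_sub_of_succ h2 hςmem, mem_joinOne_self rfl⟩
      · exact old aκ' x e ρκ aκ hκ
    | ret hκ' =>
      exact old aκ' x e ρκ aκ hκ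

lemma chain_of_wf {alloc : Var → StateF Var Addr → Addr} {e0 : Exp Var}
    {ξ ξ' : XiF Var Addr} (hwf : WF alloc e0 ξ ξ') :
    ∃ (N : ℕ) (g : ℕ → XiF Var Addr),
      g 0 = initXiF e0 ∧ g N = ξ' ∧ g (N - 1) = ξ ∧
      (∀ i < N, XiStepF alloc e0 (g i) (g (i + 1))) ∧
      (∀ i < N, WFRest alloc e0 (g i) (g (i + 1))) ∧
      (∀ i < N, ∃ ξp, WF alloc e0 ξp (g i)) := by
  induction hwf with
  | init _ =>
    exact ⟨0, fun _ => initXiF e0, rfl, rfl, rfl,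
      fun i hi => absurd hi (Nat.not_lt_zero i),
      fun i hi => absurd hi (Nat.not_lt_zero i),
      fun i hi => absurd hi (Nat.not_lt_zero i)⟩
  | @step ξp ξ₁ ξ₂ hwfp hXi hRest ih =>
    obtain ⟨N, g, hg0, hgN, hgN1, hD, hE, hF⟩ := ih
    refine ⟨N + 1, fun i => if i = N + 1 then ξ₂ else g i, ?_, ?_, ?_, ?_, ?_, ?_⟩
    · simp [hg0]
    · simp
    · simp [hgN]
    · intro i hi
      rcases Nat.lt_succ_iff_lt_or_eq.1 hi with hi' | rfl
      · have h1 : i ≠ N + 1 := by omega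
        have h2 : i + 1 ≠ N + 1 := by omega
        simpa [h1, h2, show i ≠ N by omega] using hD i hi'
      · simpa [hgN] using hXi
    · intro i hi
      rcases Nat.lt_succ_iff_lt_or_eq.1 hi with hi' | rfl
      · have h1 : i ≠ N + 1 := by omega
        have h2 : i + 1 ≠ N + 1 := by omega
        simpa [h1, h2, show i ≠ N by omega] using hE i hi'
      · simpa [hgN] using hRest
    · intro i hi
      rcases Nat.lt_succ_iff_lt_or_eq.1 hi with hi' | rfl
      · have h1 : i ≠ N + 1 := by omega
        simpa [h1] using hF i hi'
      · simpa [hgN] using ⟨ξp, hwfp⟩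
  
/-- Bundled facts about a chain of widened steps `G 0 ⤳̃Ξ G 1 ⤳̃Ξ … ⤳̃Ξ G N`. -/
structure ChainOK (alloc : Var → StateF Var Addr → Addr) (e0 : Exp Var)
    (N : ℕ) (G : ℕ → XiF Var Addr) : Prop where
  g0 : G 0 = initXiF e0
  xi : ∀ i < N, XiStepF alloc e0 (G i) (G (i + 1))
  wf : ∀ i < N, ∃ ξp, WF alloc e0 ξp (G i)
  mono : ∀ i < N, (G i).r ⊆ (G (i + 1)).r ∧ SubStore (G i).σ (G (i + 1)).σ ∧
    SubStore (G i).σκ (G (i + 1)).σκ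
  sigmak : ∀ i < N, ∀ (aκ' : KAddrF Var Addr) (x : Var) (e : Exp Var)
    (ρκ : EnvF Var Addr) (aκ : KAddrF Var Addr),
    ((x, e, ρκ), aκ) ∈ (G (i + 1)).σκ aκ' →
    ∃ (eκ' : Exp Var) (ρκ' : EnvF Var Addr), aκ' = some (eκ', ρκ') ∧
      Entry e0 aκ' ∈ (G (i + 1)).r ∧
      ∃ (f ae : AExp Var), (Exp.letCall x f ae e, ρκ, aκ) ∈ (G i).r ∧
        SubStepFWithKont alloc ⟨Exp.letCall x f ae e, ρκ, (G i).σ, (G i).σκ, aκ⟩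
          ⟨eκ', ρκ', (G (i + 1)).σ, (G (i + 1)).σκ, aκ'⟩ aκ' ((x, e, ρκ), aκ)
  halt : ∀ κ : KontF Var Addr, κ ∉ (G N).σκ ahalt
  initm : initConfF e0 ∈ (G N).r

lemma ChainOK.mono_le {alloc : Var → StateF Var Addr → Addr} {e0 : Exp Var}
    {N : ℕ} {G : ℕ → XiF Var Addr} (hch : ChainOK alloc e0 N G) :
    ∀ j, j ≤ N → ∀ i, i ≤ j → (G i).r ⊆ (G j).r ∧ SubStore (G i).σ (G j).σ ∧
      SubStore (G i).σκ (G j).σκ := by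
  intro j
  induction j with
  | zero =>
    intro _ i hi
    interval_cases i
    exact ⟨subset_rfl, subStore_rfl, subStore_rfl⟩
  | succ j ih =>
    intro hj i hi
    rcases Nat.lt_succ_iff_lt_or_eq.1 (Nat.lt_succ_of_le hi) with hi' | rfl
    · have h1 := ih (by omega) i (by omega)
      have h2 := hch.mono j (by omega)
      exact ⟨h1.1.trans h2.1, subStore_trans h1.2.1 h2.2.1, subStore_trans h1.2.2 h2.2.2⟩
    · exact ⟨subset_rfl, subStore_rfl, subStore_rfl⟩

lemma lift_alloc {alloc : Var → StateF Var Addr → Addr} {e0 : Exp Var}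
    (hC : AllocConsistent alloc e0) {N : ℕ} {G : ℕ → XiF Var Addr}
    (hch : ChainOK alloc e0 N G) :
    ∀ (k j : ℕ), j + k ≤ N →
    ∀ {e e' : Exp Var} {ρ ρ' : EnvF Var Addr} {x : Var} {aκ aκ' : KAddrF Var Addr}
      {σ₂ : StoreF Var Addr} {σκ₂ : KStoreF Var Addr},
    StepF alloc ⟨e, ρ, (G j).σ, (G j).σκ, aκ⟩
      ⟨e', upd ρ' x (alloc x ⟨e, ρ, (G j).σ, (G j).σκ, aκ⟩), σ₂, σκ₂, aκ'⟩ →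
    alloc x ⟨e, ρ, (G j).σ, (G j).σκ, aκ⟩ =
      alloc x ⟨e, ρ, (G (j + k)).σ, (G (j + k)).σκ, aκ⟩ ∧
    ∃ σ₃ σκ₃, StepF alloc ⟨e, ρ, (G (j + k)).σ, (G (j + k)).σκ, aκ⟩
      ⟨e', upd ρ' x (alloc x ⟨e, ρ, (G (j + k)).σ, (G (j + k)).σκ, aκ⟩), σ₃, σκ₃, aκ'⟩ := by
  intro k
  induction k with
  | zero =>
    intro j _ e e' ρ ρ' x aκ aκ' σ₂ σκ₂ hs
    exact ⟨rfl, σ₂, σκ₂, hs⟩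
  | succ k ih =>
    intro j hjk e e' ρ ρ' x aκ aκ' σ₂ σκ₂ hs
    obtain ⟨heq1, σ₃, σκ₃, S⟩ := ih j (by omega) hs
    obtain ⟨ξp, hwfp⟩ := hch.wf (j + k) (by omega)
    have hXijk := hch.xi (j + k) (by omega)
    have heq2 := hC ξp (G (j + k)) (G (j + k + 1)) _ _ _ _ _ _ _ _ x hwfp S hXijk
    obtain ⟨ς', hs', he, hρ, ha, _, _⟩ :=
      lift_one hC hwfp hXijk (hch.mono (j + k) (by omega)).2.1
        (hch.mono (j + k) (by omega)).2.2 S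
    refine ⟨heq1.trans heq2, ς'.σ, ς'.σκ, ?_⟩
    have he' : ς'.e = e' := he
    have hρ' : ς'.ρ = upd ρ' x (alloc x ⟨e, ρ, (G (j + k)).σ, (G (j + k)).σκ, aκ⟩) := hρ
    have ha' : ς'.aκ = aκ' := ha
    have hconv : (⟨e', upd ρ' x (alloc x ⟨e, ρ, (G (j + k + 1)).σ, (G (j + k + 1)).σκ, aκ⟩),
        ς'.σ, ς'.σκ, aκ'⟩ : StateF Var Addr) = ς' := by
      rw [← heq2, ← hρ', ← he', ← ha']
    show StepF alloc ⟨e, ρ, (G (j + k + 1)).σ, (G (j + k + 1)).σκ, aκ⟩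
      ⟨e', upd ρ' x (alloc x ⟨e, ρ, (G (j + k + 1)).σ, (G (j + k + 1)).σκ, aκ⟩),
        ς'.σ, ς'.σκ, aκ'⟩
    rw [hconv]
    exact hs'

lemma stack_exists {alloc : Var → StateF Var Addr → Addr} {e0 : Exp Var}
    {N : ℕ} {G : ℕ → XiF Var Addr} (hch : ChainOK alloc e0 N G) :
    ∀ i, i ≤ N → ∀ c ∈ (G i).r, ∃ ψ, Implied (G N).σκ c.2.2 ψ := by
  intro i
  induction i using Nat.strong_induction_on with
  | _ i ih =>
    intro hiN c hc
    match i, hiN with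
    | 0, _ =>
      rw [hch.g0] at hc
      cases hc
      exact ⟨[], Implied.halt⟩
    | (j + 1), hiN =>
      rw [(hch.xi j (by omega)).1] at hc
      obtain ⟨ς, hm, rfl⟩ := hc
      rcases hm with hm | ⟨c₀, hc₀, hstep⟩
      · subst hm
        exact ⟨[], Implied.halt⟩
      · have hςmem : ς ∈ succSetF alloc e0 (G j) := step_mem_succ hc₀ hstep
        obtain ⟨ec₀, ρc₀, aκc₀⟩ := c₀
        cases hstep with
        | @call y xv f ae eb e' _ ρlam _ _ _ hf =>
          obtain ⟨ψ₀, h₀⟩ := ih j (by omega) (by omega) _ hc₀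
          have hmem : ((y, eb, ρc₀), aκc₀) ∈ (G N).σκ (some (e', upd ρlam xv
              (alloc xv ⟨Exp.letCall y f ae eb, ρc₀, (G j).σ, (G j).σκ, aκc₀⟩))) := by
            refine (hch.mono_le N le_rfl (j + 1) (by omega)).2.2 _
              (kstore_sub_of_succ (hch.xi j (by omega)) hςmem _ ?_)
            exact mem_joinOne_self rfl
          exact ⟨((y, eb, ρc₀), aκc₀) :: ψ₀, Implied.cons hmem h₀ (by simp [ahalt])⟩
        | @ret xv ae eb _ ρκ _ _ _ aκ' hκ =>
          match j, hκ with
          | 0, hκ =>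
            rw [hch.g0] at hκ
            exact absurd hκ (Set.notMem_empty _)
          | (j₂ + 1), hκ =>
            obtain ⟨eκ', ρκ', _, _, f, ae', hcall, _⟩ :=
              hch.sigmak j₂ (by omega) _ _ _ _ _ hκ
            obtain ⟨ψ, hψ⟩ := ih j₂ (by omega) (by omega)
              (Exp.letCall xv f ae' eb, ρκ, aκ') hcall
            exact ⟨ψ, hψ⟩

open Classical in
/-- The first iteration at which a configuration appears. -/
noncomputable def depG (G : ℕ → XiF Var Addr) (c : ConfF Var Addr) : ℕ :=
  if h : ∃ i, c ∈ (G i).r then Nat.find h else 0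

open Classical in
/-- The first iteration at which a continuation appears at a given address. -/
noncomputable def birthG (G : ℕ → XiF Var Addr) (aκ : KAddrF Var Addr)
    (κ : KontF Var Addr) : ℕ :=
  if h : ∃ i, κ ∈ (G i).σκ aκ then Nat.find h else 0

/-- The termination measure contributed by an implied stack. -/
noncomputable def weightG (G : ℕ → XiF Var Addr) :
    KAddrF Var Addr → List (KontF Var Addr) → ℕ
  | _, [] => 0
  | aκ, κ :: ψ => 2 ^ birthG G aκ κ + weightG G κ.2 ψ

lemma depG_spec {G : ℕ → XiF Var Addr} {c : ConfF Var Addr}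
    (h : ∃ i, c ∈ (G i).r) : c ∈ (G (depG G c)).r := by
  classical
  unfold depG
  rw [dif_pos h]
  exact Nat.find_spec h

lemma depG_le {G : ℕ → XiF Var Addr} {c : ConfF Var Addr} {j : ℕ}
    (hj : c ∈ (G j).r) : depG G c ≤ j := by
  classical
  unfold depG
  rw [dif_pos ⟨j, hj⟩]
  exact Nat.find_min' _ hj

lemma birthG_spec {G : ℕ → XiF Var Addr} {aκ : KAddrF Var Addr} {κ : KontF Var Addr}
    (h : ∃ i, κ ∈ (G i).σκ aκ) : κ ∈ (G (birthG G aκ κ)).σκ aκ := by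
  classical
  unfold birthG
  rw [dif_pos h]
  exact Nat.find_spec h

lemma birthG_le {G : ℕ → XiF Var Addr} {aκ : KAddrF Var Addr} {κ : KontF Var Addr}
    {j : ℕ} (hj : κ ∈ (G j).σκ aκ) : birthG G aκ κ ≤ j := by
  classical
  unfold birthG
  rw [dif_pos ⟨j, hj⟩]
  exact Nat.find_min' _ hj

lemma path_main {alloc : Var → StateF Var Addr → Addr} {e0 : Exp Var}
    (hC : AllocConsistent alloc e0) {N : ℕ} {G : ℕ → XiF Var Addr}
    (hch : ChainOK alloc e0 N G) (hN : 1 ≤ N) :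
    ∀ (m d : ℕ) (c : ConfF Var Addr) (ψ : List (KontF Var Addr)),
      (∃ i ≤ N, c ∈ (G i).r) →
      2 ^ depG G c + weightG G c.2.2 ψ ≤ m → depG G c ≤ d →
      Implied (G N).σκ c.2.2 ψ →
      PathF alloc (G (N - 1)) (G N) (initConfF e0, []) (c, ψ) := by
  intro m
  induction m using Nat.strong_induction_on with
  | _ m IHm =>
  intro d
  induction d using Nat.strong_induction_on with
  | _ d IHd =>
  intro c ψ hex hm hd himp
  obtain ⟨iw, hiwN, hciw⟩ := hex
  have hexg : ∃ i, c ∈ (G i).r := ⟨iw, hciw⟩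
  have hck : c ∈ (G (depG G c)).r := depG_spec hexg
  have hkN : depG G c ≤ N := le_trans (depG_le hciw) hiwN
  rcases Nat.eq_zero_or_pos (depG G c) with hk0 | hkpos
  · -- the configuration is the initial one
    rw [hk0, hch.g0] at hck
    have hcinit : c = initConfF e0 := hck
    subst hcinit
    have hψ : ψ = [] := implied_halt himp
    subst hψ
    exact PathF.refl hch.initm Implied.halt
  · obtain ⟨j, hkj⟩ : ∃ j, depG G c = j + 1 := ⟨depG G c - 1, by omega⟩
    have hjN : j < N := by omega
    have hckj : c ∈ (G (j + 1)).r := by rw [← hkj]; exact hck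
    rw [(hch.xi j hjN).1] at hckj
    obtain ⟨ς, hmem, hceq⟩ := hckj
    rcases hmem with hm0 | ⟨c₀, hc₀, hstep⟩
    · -- the successor is the injected initial state: contradicts minimality
      subst hm0
      have hc0r : c ∈ (G 0).r := by rw [hch.g0]; exact hceq
      have := depG_le hc0r
      omega
    · have hςmem : ς ∈ succSetF alloc e0 (G j) := step_mem_succ hc₀ hstep
      subst hceq
      obtain ⟨ec₀, ρc₀, aκc₀⟩ := c₀
      cases hstep with
      | @call y xv f ae eb e' _ ρlam _ _ _ hf =>
        -- call-successor: the configuration is the entry of the callee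
        have himp' : Implied (G N).σκ (some (e', upd ρlam xv
            (alloc xv ⟨Exp.letCall y f ae eb, ρc₀, (G j).σ, (G j).σκ, aκc₀⟩))) ψ := himp
        obtain ⟨φ₁, aκ₁, ψ₁, hψeq, hκ₁, htail⟩ := implied_some himp'
        obtain ⟨x₁, e₁, ρ₁⟩ := φ₁
        have hbex : ∃ i, (((x₁, e₁, ρ₁), aκ₁) : KontF Var Addr) ∈ (G i).σκ
            (some (e', upd ρlam xv
              (alloc xv ⟨Exp.letCall y f ae eb, ρc₀, (G j).σ, (G j).σκ, aκc₀⟩))) := ⟨N, hκ₁⟩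
        have hb := birthG_spec hbex
        have hbN := birthG_le hκ₁
        have hbpos : birthG G (some (e', upd ρlam xv
            (alloc xv ⟨Exp.letCall y f ae eb, ρc₀, (G j).σ, (G j).σκ, aκc₀⟩)))
            ((x₁, e₁, ρ₁), aκ₁) ≠ 0 := by
          intro hb0
          rw [hb0, hch.g0] at hb
          exact absurd hb (Set.notMem_empty _)
        obtain ⟨b', hb'⟩ := Nat.exists_eq_succ_of_ne_zero hbpos
        rw [Nat.succ_eq_add_one] at hb'
        rw [hb'] at hb
        obtain ⟨eκ', ρκ', haddr, hEntry, f₂, ae₂, hcall, hSSK⟩ :=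
          hch.sigmak b' (by omega) _ x₁ e₁ ρ₁ aκ₁ hb
        simp only [Option.some.injEq, Prod.mk.injEq] at haddr
        obtain ⟨h1eq, h2eq⟩ := haddr
        subst h1eq
        subst h2eq
        -- recursion on the caller configuration with a strictly smaller measure
        have hm2 : 2 ^ depG G ((e', upd ρlam xv
            (alloc xv ⟨Exp.letCall y f ae eb, ρc₀, (G j).σ, (G j).σκ, aκc₀⟩),
            some (e', upd ρlam xv
              (alloc xv ⟨Exp.letCall y f ae eb, ρc₀, (G j).σ, (G j).σκ, aκc₀⟩))) : ConfF Var Addr)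
            + (2 ^ (b' + 1) + weightG G aκ₁ ψ₁) ≤ m := by
          rw [← hb']
          subst hψeq
          exact hm
        have hdep1 : depG G ((Exp.letCall x₁ f₂ ae₂ e₁, ρ₁, aκ₁) : ConfF Var Addr) ≤ b' :=
          depG_le hcall
        have h1 : (2:ℕ) ^ depG G ((Exp.letCall x₁ f₂ ae₂ e₁, ρ₁, aκ₁) : ConfF Var Addr)
            ≤ 2 ^ b' := Nat.pow_le_pow_right (by norm_num) hdep1
        have hblt : (2:ℕ) ^ b' < 2 ^ (b' + 1) :=
          Nat.pow_lt_pow_right (by norm_num) (Nat.lt_succ_self b')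
        have hmlt : 2 ^ depG G ((Exp.letCall x₁ f₂ ae₂ e₁, ρ₁, aκ₁) : ConfF Var Addr)
            + weightG G aκ₁ ψ₁ < m :=
          lt_of_lt_of_le
            (Nat.add_lt_add_right (lt_of_le_of_lt h1 hblt) _)
            (le_trans (Nat.le_add_left _ _) hm2)
        have P := IHm _ hmlt (depG G ((Exp.letCall x₁ f₂ ae₂ e₁, ρ₁, aκ₁) : ConfF Var Addr))
          (Exp.letCall x₁ f₂ ae₂ e₁, ρ₁, aκ₁) ψ₁ ⟨b', by omega, hcall⟩ le_rfl le_rfl htail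
        obtain ⟨σ₁, σκ₁, σ₂, σκ₂, hst, hsub1, hsub2, hsub3, hsub4, hkmem⟩ := hSSK
        have hml := hch.mono_le (N - 1) (by omega) b' (by omega)
        have hml2 := hch.mono_le N le_rfl (b' + 1) (by omega)
        subst hψeq
        exact PathF.call P hκ₁ ⟨σ₁, σκ₁, σ₂, σκ₂, hst,
          subStore_trans hsub1 hml.2.1, subStore_trans hsub2 hml.2.2,
          subStore_trans hsub3 hml2.2.1, subStore_trans hsub4 hml2.2.2⟩
      | @ret xv ae eb _ ρκ _ _ _ aκ' hκ =>
        -- ret-successor: recurse on the predecessor with the popped continuation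
        have hmlj := hch.mono_le (N - 1) (by omega) j (by omega)
        have hmljN := hch.mono_le N le_rfl j (by omega)
        have hmlj1N := hch.mono_le N le_rfl (j + 1) (by omega)
        have himp0 : Implied (G N).σκ aκ' ψ := himp
        have hns : aκc₀ ≠ ahalt := by
          intro h
          rw [h] at hκ
          exact hch.halt _ (hmljN.2.2 _ hκ)
        have himp2 : Implied (G N).σκ aκc₀ (((xv, eb, ρκ), aκ') :: ψ) :=
          Implied.cons (hmljN.2.2 _ hκ) himp0 hns
        have hdj : j + 1 ≤ d := by rw [← hkj]; exact hd
        have hm2 : 2 ^ (j + 1) + weightG G aκ' ψ ≤ m := by rw [← hkj]; exact hm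
        have hdep0 : depG G ((Exp.ret ae, ρc₀, aκc₀) : ConfF Var Addr) ≤ j := depG_le hc₀
        have hbirth : birthG G aκc₀ ((xv, eb, ρκ), aκ') ≤ j := birthG_le hκ
        have hp1 : (2:ℕ) ^ depG G ((Exp.ret ae, ρc₀, aκc₀) : ConfF Var Addr) ≤ 2 ^ j :=
          Nat.pow_le_pow_right (by norm_num) hdep0
        have hp2 : (2:ℕ) ^ birthG G aκc₀ ((xv, eb, ρκ), aκ') ≤ 2 ^ j :=
          Nat.pow_le_pow_right (by norm_num) hbirth
        have hpow : (2:ℕ) ^ j + (2:ℕ) ^ j = 2 ^ (j + 1) := by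
          rw [pow_succ]
          ring
        have hmeas : 2 ^ depG G ((Exp.ret ae, ρc₀, aκc₀) : ConfF Var Addr)
            + weightG G aκc₀ (((xv, eb, ρκ), aκ') :: ψ) ≤ m := by
          have hwexp : weightG G aκc₀ (((xv, eb, ρκ), aκ') :: ψ)
              = 2 ^ birthG G aκc₀ ((xv, eb, ρκ), aκ') + weightG G aκ' ψ := rfl
          rw [hwexp]
          calc 2 ^ depG G ((Exp.ret ae, ρc₀, aκc₀) : ConfF Var Addr)
              + (2 ^ birthG G aκc₀ ((xv, eb, ρκ), aκ') + weightG G aκ' ψ)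
              ≤ 2 ^ j + (2 ^ j + weightG G aκ' ψ) :=
                Nat.add_le_add hp1 (Nat.add_le_add_right hp2 _)
            _ = 2 ^ (j + 1) + weightG G aκ' ψ := by omega
            _ ≤ m := hm2
        have P := IHd (d - 1) (by omega) (Exp.ret ae, ρc₀, aκc₀)
          (((xv, eb, ρκ), aκ') :: ψ) ⟨j, by omega, hc₀⟩ hmeas
          (le_trans hdep0 (by omega)) himp2
        -- lift the allocation from level j to level N - 1
        have hstepret : StepF alloc ⟨Exp.ret ae, ρc₀, (G j).σ, (G j).σκ, aκc₀⟩
            ⟨eb, upd ρκ xv (alloc xv ⟨Exp.ret ae, ρc₀, (G j).σ, (G j).σκ, aκc₀⟩),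
             joinOne (G j).σ (alloc xv ⟨Exp.ret ae, ρc₀, (G j).σ, (G j).σκ, aκc₀⟩)
               (aeval ae ρc₀ (G j).σ), (G j).σκ, aκ'⟩ := StepF.ret hκ
        obtain ⟨haleq, -⟩ := lift_alloc hC hch (N - 1 - j) j (by omega) hstepret
        have hjeq : j + (N - 1 - j) = N - 1 := by omega
        rw [hjeq] at haleq
        have hckj1 : ((eb, upd ρκ xv (alloc xv ⟨Exp.ret ae, ρc₀, (G j).σ, (G j).σκ, aκc₀⟩),
            aκ') : ConfF Var Addr) ∈ (G (j + 1)).r := by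
          rw [← hkj]
          exact hck
        have htmem : ((eb, upd ρκ xv
            (alloc xv ⟨Exp.ret ae, ρc₀, (G (N - 1)).σ, (G (N - 1)).σκ, aκc₀⟩),
            aκ') : ConfF Var Addr) ∈ (G N).r := by
          rw [← haleq]
          exact hmlj1N.1 hckj1
        have hσ2sub : SubStore (joinOne (G j).σ
            (alloc xv ⟨Exp.ret ae, ρc₀, (G j).σ, (G j).σκ, aκc₀⟩)
            (aeval ae ρc₀ (G j).σ)) (G N).σ := by
          have h1 := store_sub_of_succ (hch.xi j hjN) hςmem
          exact subStore_trans h1 (hch.mono_le N le_rfl (j + 1) (by omega)).2.1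
        have hsubstep : SubStepF alloc
            ⟨Exp.ret ae, ρc₀, (G (N - 1)).σ, (G (N - 1)).σκ, aκc₀⟩
            ⟨eb, upd ρκ xv
              (alloc xv ⟨Exp.ret ae, ρc₀, (G (N - 1)).σ, (G (N - 1)).σκ, aκc₀⟩),
             (G N).σ, (G N).σκ, aκ'⟩ := by
          refine ⟨(G j).σ, (G j).σκ, joinOne (G j).σ
            (alloc xv ⟨Exp.ret ae, ρc₀, (G j).σ, (G j).σκ, aκc₀⟩)
            (aeval ae ρc₀ (G j).σ), (G j).σκ, ?_, hmlj.2.1, hmlj.2.2, hσ2sub, hmljN.2.2⟩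
          rw [← haleq]
          exact hstepret
        have hret := PathF.ret P (hmlj.1 hc₀) (hmlj.2.2 _ hκ) htmem hsubstep
        dsimp only
        rw [haleq]
        exact hret

end Aux

/-- **Well-formedness is preserved by widened steps** (inductive step of Lemma 1):
(i) the initial result is well-formed (relative to itself), and
(ii) if `ξ̃' ⤳̃Ξ ξ̃''` and `wf(ξ̃, ξ̃')`, then `wf(ξ̃', ξ̃'')`. -/
theorem wf_preserved_by_steps
    {Var Addr : Type} (e0 : Exp Var) (alloc : Var → StateF Var Addr → Addr)
    (hAllocConsistent : AllocConsistent alloc e0) :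
    WF alloc e0 (initXiF e0) (initXiF e0) ∧
    (∀ ξ ξ' ξ'' : XiF Var Addr,
      XiStepF alloc e0 ξ' ξ'' → WF alloc e0 ξ ξ' → WF alloc e0 ξ' ξ'') := by
  have hC := hAllocConsistent
  constructor
  · exact WF.init (wfrest_init alloc e0)
  · intro ξ ξ' ξ'' hXi'' hwf
    refine WF.step hwf hXi'' ?_
    have hmono := mono_step hC hwf hXi''
    have hinit'' : initConfF e0 ∈ ξ''.r := init_mem_r hXi''
    have hhalt'' := comp_halt hwf hXi''
    have hσ'' := comp_sigma hC hwf hXi''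
    have hσκ'' := comp_sigmak hC hwf hXi''
    obtain ⟨N, g, hg0, hgN, hgN1, hD, hE, hF⟩ := chain_of_wf hwf
    let G : ℕ → XiF Var Addr := fun i => if i = N + 1 then ξ'' else g i
    have hGle : ∀ i, i ≤ N → G i = g i := by
      intro i hi
      show (if i = N + 1 then ξ'' else g i) = g i
      rw [if_neg (by omega)]
    have hGtop : G (N + 1) = ξ'' := by
      show (if N + 1 = N + 1 then ξ'' else g (N + 1)) = ξ''
      rw [if_pos rfl]
    have hGN : G N = ξ' := by rw [hGle N le_rfl, hgN]
    have hch : ChainOK alloc e0 (N + 1) G := by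
      refine ⟨?_, ?_, ?_, ?_, ?_, ?_, ?_⟩
      · rw [hGle 0 (by omega)]; exact hg0
      · intro i hi
        rcases Nat.lt_succ_iff_lt_or_eq.1 hi with h | rfl
        · rw [hGle i (by omega), hGle (i + 1) (by omega)]
          exact hD i h
        · rw [hGN, hGtop]
          exact hXi''
      · intro i hi
        rcases Nat.lt_succ_iff_lt_or_eq.1 hi with h | rfl
        · rw [hGle i (by omega)]
          exact hF i h
        · rw [hGN]
          exact ⟨ξ, hwf⟩
      · intro i hi
        rcases Nat.lt_succ_iff_lt_or_eq.1 hi with h | rfl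
        · rw [hGle i (by omega), hGle (i + 1) (by omega)]
          exact (hE i h).1
        · rw [hGN, hGtop]
          exact hmono
      · intro i hi
        rcases Nat.lt_succ_iff_lt_or_eq.1 hi with h | rfl
        · rw [hGle i (by omega), hGle (i + 1) (by omega)]
          exact (hE i h).2.2.2.2.2
        · rw [hGN, hGtop]
          exact hσκ''
      · rw [hGtop]
        exact hhalt''
      · rw [hGtop]
        exact hinit''
    have hr : ∀ c ∈ ξ''.r, ∃ ψ, Implied ξ''.σκ c.2.2 ψ ∧
        PathF alloc ξ' ξ'' (initConfF e0, []) (c, ψ) := by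
      intro c hc
      have hcm : c ∈ (G (N + 1)).r := by rw [hGtop]; exact hc
      obtain ⟨ψ, hψ⟩ := stack_exists hch (N + 1) le_rfl c hcm
      have hp := path_main hC hch (by omega)
        (2 ^ depG G c + weightG G c.2.2 ψ) (depG G c) c ψ
        ⟨N + 1, le_rfl, hcm⟩ le_rfl le_rfl hψ
      have hN1 : G (N + 1 - 1) = ξ' := hGN
      rw [hN1, hGtop] at hp
      rw [hGtop] at hψ
      exact ⟨ψ, hψ, hp⟩
    exact ⟨⟨hmono.1, hmono.2.1, hmono.2.2⟩, hinit'', hhalt'', hr, hσ'', hσκ''⟩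

end P4F
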